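/- arXiv:1803.04657 — 2 statements merged into one kernel-verified Lean document; each statement's English description precedes it below -/
import Mathlib

section
/- Let α < 0 be a real number with f(α) < 0 (equivalently, x0 < α < 0 where x0 ≈ −3.09997 is the root of f). Then for every length vector L with square count n(L) = n ≥ 3, one has Ψ_α(L) ≥ f(α)·(n−1) + 2·g(α) + (n−3)·h(α), with equality if and only if L = (2,2,…,2) with n−1 entries. (This is the lower bound in Proposition 1: among polyomino chains in Ω_n, the zigzag chain Z_n uniquely minimizes χ_α for x0 < α < 0.) -/
/-!
For `α ≤ 0` the map `t ↦ t ^ α` and its forward difference `t ↦ t ^ α - (t + 1) ^ α` are convex on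
`(0, ∞)`, which makes `g(α)` and `h(α)` nonpositive. A length vector with square count `n` has at
most `n - 1` entries, at most two external and at most `n - 3` internal entries equal to `2`.
Since `f(α) < 0`, each of the three terms of `Ψ_α` is therefore at least its value on the zigzag
vector `(2, …, 2)`, and equality in the `f`-term already forces `n - 1` entries, all equal to `2`.
-/

noncomputable def f (α : ℝ) : ℝ := 2 * (5:ℝ) ^ α - 6 * (6:ℝ) ^ α + 4 * (7:ℝ) ^ α
noncomputable def g (α : ℝ) : ℝ := 2 * (6:ℝ) ^ α - (5:ℝ) ^ α - (7:ℝ) ^ α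
noncomputable def h (α : ℝ) : ℝ := 5 * (6:ℝ) ^ α - 2 * (5:ℝ) ^ α - 4 * (7:ℝ) ^ α + (8:ℝ) ^ α

/-- A length vector: a nonempty list of segment lengths, each at least 2. -/
def LengthVector (L : List ℕ) : Prop := L ≠ [] ∧ ∀ l ∈ L, 2 ≤ l

/-- Square count of a length vector: `l₁ + ⋯ + l_s − (s − 1)`. -/
def nSq (L : List ℕ) : ℕ := L.sum - (L.length - 1)

/-- Number of external (first or last) entries equal to 2. -/
def e2 (L : List ℕ) : ℕ :=
  ((Finset.range L.length).filter
    (fun j => (j = 0 ∨ j = L.length - 1) ∧ L.getD j 0 = 2)).card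

/-- Number of internal entries (neither first nor last) equal to 2. -/
def i2 (L : List ℕ) : ℕ :=
  ((Finset.range L.length).filter
    (fun j => j ≠ 0 ∧ j ≠ L.length - 1 ∧ L.getD j 0 = 2)).card

/-- The weight Ψ_α(L) = f(α)·s + g(α)·e₂(L) + h(α)·i₂(L). -/
noncomputable def psi (α : ℝ) (L : List ℕ) : ℝ :=
  f α * L.length + g α * e2 L + h α * i2 L

open Set

lemma convexOn_of_hasDerivAt2_nonneg {D : Set ℝ} (hD : Convex ℝ D) (hDo : IsOpen D)
    {F F' F'' : ℝ → ℝ} (hF : ∀ x ∈ D, HasDerivAt F (F' x) x)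
    (hF' : ∀ x ∈ D, HasDerivAt F' (F'' x) x) (hF'' : ∀ x ∈ D, 0 ≤ F'' x) :
    ConvexOn ℝ D F := by
  refine convexOn_of_hasDerivWithinAt2_nonneg (f' := F') (f'' := F'') hD
    (fun x hx => (hF x hx).continuousAt.continuousWithinAt) ?_ ?_ ?_ <;>
  rw [hDo.interior_eq]
  · exact fun x hx => (hF x hx).hasDerivWithinAt
  · exact fun x hx => (hF' x hx).hasDerivWithinAt
  · exact hF''

lemma ConvexOn.two_mul_le_add {s : Set ℝ} {φ : ℝ → ℝ} (hφ : ConvexOn ℝ s φ) {a b m : ℝ}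
    (ha : a ∈ s) (hb : b ∈ s) (hm : a + b = 2 * m) : 2 * φ m ≤ φ a + φ b := by
  have := hφ.2 ha hb (by norm_num : (0 : ℝ) ≤ 1 / 2) (by norm_num : (0 : ℝ) ≤ 1 / 2) (by norm_num)
  simp only [smul_eq_mul, show 1 / 2 * a + 1 / 2 * b = m by linarith] at this
  linarith

lemma convexOn_rpow_of_nonpos {p : ℝ} (hp : p ≤ 0) : ConvexOn ℝ (Ioi 0) (fun t : ℝ => t ^ p) :=
  convexOn_of_hasDerivAt2_nonneg (convex_Ioi 0) isOpen_Ioi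
    (fun t ht => Real.hasDerivAt_rpow_const (Or.inl (ne_of_gt ht)))
    (fun t ht => (Real.hasDerivAt_rpow_const (Or.inl (ne_of_gt ht))).const_mul p)
    (fun t ht => mul_nonneg_of_nonpos_of_nonpos hp
      (mul_nonpos_of_nonpos_of_nonneg (by linarith) (Real.rpow_nonneg (le_of_lt ht) _)))

lemma convexOn_rpow_sub_rpow_add {p c : ℝ} (hp : p ≤ 0) (hc : 0 ≤ c) :
    ConvexOn ℝ (Ioi 0) (fun t : ℝ => t ^ p - (t + c) ^ p) := by
  refine convexOn_of_hasDerivAt2_nonneg (convex_Ioi 0) isOpen_Ioi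
    (F' := fun t => p * t ^ (p - 1) - p * (t + c) ^ (p - 1))
    (F'' := fun t => p * ((p - 1) * t ^ (p - 1 - 1)) - p * ((p - 1) * (t + c) ^ (p - 1 - 1)))
    (fun t ht => ?_) (fun t ht => ?_) (fun t ht => ?_)
  · have htc : t + c ≠ 0 := by simp only [mem_Ioi] at ht; linarith
    exact (Real.hasDerivAt_rpow_const (Or.inl (ne_of_gt ht))).sub
      (HasDerivAt.comp_add_const t c (Real.hasDerivAt_rpow_const (Or.inl htc)))
  · have htc : t + c ≠ 0 := by simp only [mem_Ioi] at ht; linarith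
    exact ((Real.hasDerivAt_rpow_const (Or.inl (ne_of_gt ht))).const_mul p).sub
      ((HasDerivAt.comp_add_const t c (Real.hasDerivAt_rpow_const (Or.inl htc))).const_mul p)
  · have hpow : (t + c) ^ (p - 1 - 1) ≤ t ^ (p - 1 - 1) :=
      Real.rpow_le_rpow_of_nonpos ht (by linarith) (by linarith)
    have hpp : 0 ≤ p * (p - 1) := mul_nonneg_of_nonpos_of_nonpos hp (by linarith)
    nlinarith

lemma g_nonpos {α : ℝ} (hα : α ≤ 0) : g α ≤ 0 := by
  have := (convexOn_rpow_of_nonpos hα).two_mul_le_add (a := 5) (b := 7) (m := 6)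
    (by norm_num) (by norm_num) (by norm_num)
  rw [g]
  linarith

/-- `h = g + Δ³` with `Δ³ = 8^α - 3·7^α + 3·6^α - 5^α`, which is minus the second difference
at `5, 6, 7` of the convex function `t ↦ t ^ α - (t + 1) ^ α`. -/
lemma h_nonpos {α : ℝ} (hα : α ≤ 0) : h α ≤ 0 := by
  have hΔ := (convexOn_rpow_sub_rpow_add hα zero_le_one).two_mul_le_add (a := 5) (b := 7) (m := 6)
    (by norm_num) (by norm_num) (by norm_num)
  norm_num at hΔ
  have hg := g_nonpos hα
  rw [g] at hg
  rw [h]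
  linarith

lemma LengthVector.length_lt_nSq {L : List ℕ} (hL : LengthVector L) : L.length < nSq L := by
  have hpos : 0 < L.length := List.length_pos_iff.mpr hL.1
  have hsum : L.length • 2 ≤ L.sum := List.card_nsmul_le_sum L 2 hL.2
  rw [smul_eq_mul] at hsum
  unfold nSq
  omega

lemma LengthVector.eq_replicate_of_nSq_le {L : List ℕ} (hL : LengthVector L)
    (hn : nSq L ≤ L.length + 1) : L = List.replicate L.length 2 := by
  refine List.eq_replicate_iff.mpr ⟨rfl, fun b hb => ?_⟩
  by_contra hb2
  have hlt := List.sum_lt_sum (fun _ => 2) id (fun l hl => hL.2 l hl)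
    ⟨b, hb, lt_of_le_of_ne (hL.2 b hb) (Ne.symm hb2)⟩
  simp only [List.map_const', List.sum_replicate, List.map_id, smul_eq_mul] at hlt
  have hpos := List.length_pos_of_mem hb
  unfold nSq at hn
  omega

lemma e2_le_two (L : List ℕ) : e2 L ≤ 2 := by
  refine (Finset.card_le_card (t := {0, L.length - 1}) fun j hj => ?_).trans Finset.card_le_two
  simp only [Finset.mem_filter] at hj
  simp only [Finset.mem_insert, Finset.mem_singleton]
  exact hj.2.1

lemma i2_le_length_sub_two (L : List ℕ) : i2 L ≤ L.length - 2 := by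
  refine (Finset.card_le_card (t := Finset.Ioo 0 (L.length - 1)) fun j hj => ?_).trans
    (by simp only [Nat.card_Ioo]; omega)
  simp only [Finset.mem_filter, Finset.mem_range] at hj
  simp only [Finset.mem_Ioo]
  omega

lemma e2_replicate_two {m : ℕ} (hm : 2 ≤ m) : e2 (List.replicate m 2) = 2 := by
  have hfilter : (Finset.range m).filter
      (fun j => (j = 0 ∨ j = m - 1) ∧ (List.replicate m 2).getD j 0 = 2) = {0, m - 1} := by
    ext j
    by_cases hj : j < m <;> simp [hj, List.getElem?_replicate]
    omega
  rw [e2, List.length_replicate, hfilter, Finset.card_pair (by omega)]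

lemma i2_replicate_two (m : ℕ) : i2 (List.replicate m 2) = m - 2 := by
  have hfilter : (Finset.range m).filter
      (fun j => j ≠ 0 ∧ j ≠ m - 1 ∧ (List.replicate m 2).getD j 0 = 2) = Finset.Ioo 0 (m - 1) := by
    ext j
    by_cases hj : j < m <;> simp [hj, List.getElem?_replicate] <;> omega
  rw [i2, List.length_replicate, hfilter, Nat.card_Ioo]
  omega

lemma psi_replicate_two (α : ℝ) {m : ℕ} (hm : 2 ≤ m) :
    psi α (List.replicate m 2) = f α * m + 2 * g α + ((m : ℝ) - 2) * h α := by
  rw [psi, List.length_replicate, e2_replicate_two hm, i2_replicate_two, Nat.cast_sub hm]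
  push_cast
  ring

/-- Proposition 1, lower bound: if α < 0 and f(α) < 0, then every length vector
with square count n ≥ 3 satisfies Ψ_α(L) ≥ f(α)(n−1) + 2g(α) + (n−3)h(α),
with equality iff L = (2,…,2) with n−1 entries (the zigzag chain). -/
theorem psi_ge_zigzag (α : ℝ) (hα : α < 0) (hf : f α < 0)
    (L : List ℕ) (hL : LengthVector L) (n : ℕ) (hn : nSq L = n) (hn3 : 3 ≤ n) :
    f α * ((n : ℝ) - 1) + 2 * g α + ((n : ℝ) - 3) * h α ≤ psi α L ∧
      (psi α L = f α * ((n : ℝ) - 1) + 2 * g α + ((n : ℝ) - 3) * h α ↔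
        L = List.replicate (n - 1) 2) := by
  have hs : L.length + 1 ≤ n := hn ▸ hL.length_lt_nSq
  have hi : i2 L + 3 ≤ n := by have := i2_le_length_sub_two L; omega
  have hsR : (L.length : ℝ) + 1 ≤ n := by exact_mod_cast hs
  have hiR : (i2 L : ℝ) + 3 ≤ n := by exact_mod_cast hi
  have heR : (e2 L : ℝ) ≤ 2 := by exact_mod_cast e2_le_two L
  have hs_term : 0 ≤ f α * ((L.length : ℝ) - (n - 1)) :=
    mul_nonneg_of_nonpos_of_nonpos hf.le (by linarith)
  have he_term : 0 ≤ g α * ((e2 L : ℝ) - 2) :=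
    mul_nonneg_of_nonpos_of_nonpos (g_nonpos hα.le) (by linarith)
  have hi_term : 0 ≤ h α * ((i2 L : ℝ) - (n - 3)) :=
    mul_nonneg_of_nonpos_of_nonpos (h_nonpos hα.le) (by linarith)
  have hdiff : psi α L - (f α * ((n : ℝ) - 1) + 2 * g α + ((n : ℝ) - 3) * h α) =
      f α * ((L.length : ℝ) - (n - 1)) + g α * ((e2 L : ℝ) - 2) +
        h α * ((i2 L : ℝ) - (n - 3)) := by
    rw [psi]; ring
  refine ⟨by linarith, fun heq => ?_, fun hrep => ?_⟩
  · have hlen : (L.length : ℝ) - (n - 1) = 0 :=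
      (mul_eq_zero.mp (by linarith : f α * ((L.length : ℝ) - (n - 1)) = 0)).resolve_left hf.ne
    have hlen' : L.length + 1 = n := by exact_mod_cast (by linarith : (L.length : ℝ) + 1 = n)
    rw [show n - 1 = L.length by omega]
    exact hL.eq_replicate_of_nSq_le (by omega)
  · rw [hrep, psi_replicate_two α (by omega), Nat.cast_sub (by omega)]
    push_cast
    ring
end

section
/- Let α < 0 be a real number with f(α) > 0 and f(α) + g(α) < 0 (equivalently, x1 < α < x0, where x0 ≈ −3.09997 is the root of f and x1 ≈ −5.46343 is the root of f+g). Then for every length vector L with square count n(L) = n ≥ 3, one has Ψ_α(L) ≤ f(α)·⌊(n−1)/2⌋, with equality if and only if every entry of L belongs to {3,4} and at most one entry equals 4. (This is Proposition 4, first part: for x1 < α < x0 the maximizers of χ_α over Ω_n are exactly the chains in which no segment has length 2 or length ≥ 5 and at most one segment has length 4.) -/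
/-! Let `t` be the number of entries equal to 2 and `E` the total excess of the other entries
over 3, so that `n - 1 = 2s - t + E`. Then
`2 (Ψ - f ⌊(n-1)/2⌋) ≤ f + e₂ (f + 2g) + i₂ (f + 2h)`, where `f + 2g < 0` because
`f + g < 0 < f`, `f + 2h < 2g`, and `f + h = 8^α - 6^α < 0`; so a single entry 2 already pushes
`Ψ` strictly below the bound. Without entries 2, `Ψ = f s` and
`s = ⌊(n-1)/2⌋ - ⌊E/2⌋`, so equality holds exactly when `E ≤ 1`. -/

namespace List

theorem card_filter_getD_eq_count {α : Type*} [DecidableEq α] (L : List α) (d x : α) :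
    ((Finset.range L.length).filter (fun j => L.getD j d = x)).card = L.count x := by
  induction L with
  | nil => simp
  | cons a T ih =>
    rw [count_cons, length_cons, Finset.card_filter, Finset.sum_range_succ',
      ← Finset.card_filter]
    simp only [getD_cons_succ, getD_cons_zero, ih, beq_iff_eq]

theorem succ_mul_length_le_sum_add_count {k : ℕ} {L : List ℕ} (hk : ∀ l ∈ L, k ≤ l) :
    (k + 1) * L.length ≤ L.sum + L.count k := by
  induction L with
  | nil => simp
  | cons a T ih =>
    have := ih fun l hl => hk l (mem_cons_of_mem a hl)
    have ha := hk a mem_cons_self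
    rw [length_cons, sum_cons, count_cons, Nat.mul_succ]
    split_ifs <;> simp_all <;> omega

theorem sum_le_mul_length_iff {k : ℕ} {L : List ℕ} (hk : ∀ l ∈ L, k ≤ l) :
    L.sum ≤ k * L.length ↔ ∀ l ∈ L, l = k := by
  induction L with
  | nil => simp
  | cons a T ih =>
    have hT : ∀ l ∈ T, k ≤ l := fun l hl => hk l (mem_cons_of_mem a hl)
    have hTsum : k * T.length ≤ T.sum := by
      simpa [mul_comm] using T.card_nsmul_le_sum k hT
    have ha := hk a mem_cons_self
    rw [sum_cons, length_cons, forall_mem_cons, ← ih hT, Nat.mul_succ]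
    omega

theorem sum_le_mul_length_add_one_iff {k : ℕ} {L : List ℕ} (hk : ∀ l ∈ L, k ≤ l) :
    L.sum ≤ k * L.length + 1 ↔
      (∀ l ∈ L, l = k ∨ l = k + 1) ∧ L.count (k + 1) ≤ 1 := by
  induction L with
  | nil => simp
  | cons a T ih =>
    have hT : ∀ l ∈ T, k ≤ l := fun l hl => hk l (mem_cons_of_mem a hl)
    have hTsum : k * T.length ≤ T.sum := by
      simpa [mul_comm] using T.card_nsmul_le_sum k hT
    have ha := hk a mem_cons_self
    rw [sum_cons, length_cons, forall_mem_cons, count_cons, Nat.mul_succ]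
    obtain rfl | rfl | hbig : a = k ∨ a = k + 1 ∨ k + 2 ≤ a := by omega
    · simp only [true_or, true_and, beq_iff_eq, Nat.ne_add_one, if_false, add_zero, ← ih hT]
      omega
    · simp only [or_true, true_and, beq_self_eq_true, if_true]
      rw [show k + 1 + T.sum ≤ k * T.length + k + 1 ↔ T.sum ≤ k * T.length by omega,
        sum_le_mul_length_iff hT, show count (k + 1) T + 1 ≤ 1 ↔ count (k + 1) T = 0 by omega,
        count_eq_zero]
      constructor
      · intro h
        exact ⟨fun l hl => .inl (h l hl), fun hmem => by have := h _ hmem; omega⟩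
      · rintro ⟨h, hnot⟩ l hl
        exact (h l hl).resolve_right fun hl' => hnot (hl' ▸ hl)
    · exact iff_of_false (by omega) fun h => by omega

end List

theorem e2_add_i2 (L : List ℕ) : e2 L + i2 L = L.count 2 := by
  rw [← L.card_filter_getD_eq_count 0 2, e2, i2, Finset.card_filter, Finset.card_filter,
    Finset.card_filter, ← Finset.sum_add_distrib]
  refine Finset.sum_congr rfl fun j _ => ?_
  by_cases h₁ : j = 0 <;> by_cases h₂ : j = L.length - 1 <;> simp [h₁, h₂]

theorem psi_of_count_two_eq_zero (α : ℝ) {L : List ℕ} (hL : L.count 2 = 0) :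
    psi α L = f α * L.length := by
  have := e2_add_i2 L
  simp [psi, show e2 L = 0 by omega, show i2 L = 0 by omega]

theorem f_add_h (α : ℝ) : f α + h α = (8 : ℝ) ^ α - (6 : ℝ) ^ α := by
  unfold f h; ring

theorem f_add_h_neg {α : ℝ} (hα : α < 0) : f α + h α < 0 := by
  rw [f_add_h, sub_neg]
  exact Real.rpow_lt_rpow_of_neg (by norm_num) (by norm_num) hα

theorem f_add_two_mul_h_lt_two_mul_g {α : ℝ} (hα : α < 0) : f α + 2 * h α < 2 * g α := by
  have : (8 : ℝ) ^ α < (7 : ℝ) ^ α := Real.rpow_lt_rpow_of_neg (by norm_num) (by norm_num) hα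
  unfold f g h; linarith

theorem psi_lt_of_two_mem {α : ℝ} (hα : α < 0) (hf : 0 < f α) (hfg : f α + g α < 0)
    {L : List ℕ} {m : ℕ} (hm : 2 * L.length ≤ 2 * m + 1 + L.count 2) (h2 : 2 ∈ L) :
    psi α L < f α * m := by
  have hfh := f_add_h_neg hα
  have hfhg := f_add_two_mul_h_lt_two_mul_g hα
  have hcount := e2_add_i2 L
  have hs : 2 * (L.length : ℝ) ≤ 2 * m + 1 + e2 L + i2 L := by
    exact_mod_cast (by omega : 2 * L.length ≤ 2 * m + 1 + e2 L + i2 L)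
  have key :
      2 * (psi α L - f α * m) ≤ f α + e2 L * (f α + 2 * g α) + i2 L * (f α + 2 * h α) := by
    unfold psi; nlinarith [mul_le_mul_of_nonneg_left hs hf.le]
  have ha : (0 : ℝ) ≤ e2 L := Nat.cast_nonneg _
  have hb : (0 : ℝ) ≤ i2 L := Nat.cast_nonneg _
  have hpos : 1 ≤ e2 L ∨ 1 ≤ i2 L := by
    have := List.count_pos_iff.2 h2
    omega
  rcases hpos with he | hi
  · have he' : (1 : ℝ) ≤ e2 L := by exact_mod_cast he
    nlinarith
  · have hi' : (1 : ℝ) ≤ i2 L := by exact_mod_cast hi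
    nlinarith

theorem psi_le_of_fg_neg_general (α : ℝ) (hα : α < 0) (hf : 0 < f α) (hfg : f α + g α < 0)
    (L : List ℕ) (hL : LengthVector L) (n : ℕ) (hn : nSq L = n) :
    psi α L ≤ f α * (((n - 1) / 2 : ℕ) : ℝ) ∧
      (psi α L = f α * (((n - 1) / 2 : ℕ) : ℝ) ↔
        (∀ l ∈ L, l = 3 ∨ l = 4) ∧ L.count 4 ≤ 1) := by
  obtain ⟨hne, hL2⟩ := hL
  have hlen_pos : 0 < L.length := List.length_pos_iff.2 hne
  have hsum2 : 2 * L.length ≤ L.sum := by simpa [mul_comm] using L.card_nsmul_le_sum 2 hL2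
  unfold nSq at hn
  by_cases h2 : 2 ∈ L
  · have hsum3 : 3 * L.length ≤ L.sum + L.count 2 := List.succ_mul_length_le_sum_add_count hL2
    have hlt := psi_lt_of_two_mem hα hf hfg (m := (n - 1) / 2) (by omega) h2
    exact ⟨hlt.le, iff_of_false hlt.ne fun h34 => absurd (h34.1 2 h2) (by decide)⟩
  · have hL3 : ∀ l ∈ L, 3 ≤ l := fun l hl => (hL2 l hl).lt_of_ne fun e => h2 (e ▸ hl)
    have hcount : L.count 2 = 0 := List.count_eq_zero.2 h2
    have hsum3 : 3 * L.length ≤ L.sum := by simpa [mul_comm] using L.card_nsmul_le_sum 3 hL3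
    have hlen : L.length ≤ (n - 1) / 2 := by omega
    have hlen_eq : L.length = (n - 1) / 2 ↔ L.sum ≤ 3 * L.length + 1 := by omega
    rw [psi_of_count_two_eq_zero α hcount, mul_right_inj' hf.ne', Nat.cast_inj, hlen_eq]
    exact ⟨by gcongr, List.sum_le_mul_length_add_one_iff hL3⟩

/-- Proposition 4, first part: if α < 0, f(α) > 0 and f(α) + g(α) < 0, then
every length vector with square count n ≥ 3 satisfies
Ψ_α(L) ≤ f(α)·⌊(n−1)/2⌋, with equality iff every entry of L is 3 or 4 and at
most one entry equals 4. -/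
theorem psi_le_of_fg_neg (α : ℝ) (hα : α < 0) (hf : 0 < f α) (hfg : f α + g α < 0)
    (L : List ℕ) (hL : LengthVector L) (n : ℕ) (hn : nSq L = n) (hn3 : 3 ≤ n) :
    psi α L ≤ f α * (((n - 1) / 2 : ℕ) : ℝ) ∧
      (psi α L = f α * (((n - 1) / 2 : ℕ) : ℝ) ↔
        (∀ l ∈ L, l = 3 ∨ l = 4) ∧ L.count 4 ≤ 1) :=
  psi_le_of_fg_neg_general α hα hf hfg L hL n hn
end
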